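/- arXiv:1905.01229 — 2 statements merged into one kernel-verified Lean document; each statement's English description precedes it below -/
import Mathlib

section
/- Define g(β) = f(β) − β f'(β), where f(β) = ∑_{k=1}^∞ (k^{k-2}/k!)[β^{1/2}∫₀^β x^{k-3/2}e^{-kx}dx + ∫_β^∞ x^{k-1}e^{-kx}dx]. Then g(β) ≥ (β^{1/2}/2) ∑_{k=1}^∞ (k^{k-2}/k!) ∫₀^β x^{k-3/2} e^{-kx} dx for all β > 0, and hence g(β) → ∞ as β → ∞. -/
/-!
Termwise, `fₖ(β) = √β (Iₖ(β) + β Jₖ(β))` with `Jₖ ≥ 0`, while `β f'(β) = (√β/2) ∑ aₖ Iₖ(β)`,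
so `g = f - β f' ≥ √β ∑ aₖ Iₖ - (√β/2) ∑ aₖ Iₖ`. All series converge because `x e^{-x} ≤ e^{-1}`
bounds both integrals by `e^{-k}` times a Gamma value, while `aₖ = k^{k-2}/k! ≤ e^k/k²`.
The lower bound is `√β/2` times a positive nondecreasing function of `β`, hence tends to
infinity.
-/

open MeasureTheory Real Filter

noncomputable def fkAux (k : ℕ) (β : ℝ) : ℝ :=
  β ^ ((1:ℝ)/2) * ∫ x in Set.Ioc (0:ℝ) β, x ^ ((k : ℝ) - 3/2) * Real.exp (-(k:ℝ) * x)
    + ∫ x in Set.Ioi β, x ^ ((k : ℝ) - 1) * Real.exp (-(k:ℝ) * x)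

noncomputable def fAux (β : ℝ) : ℝ :=
  ∑' k : ℕ, ((k + 1 : ℝ) ^ ((k : ℝ) - 1) / (Nat.factorial (k + 1) : ℝ)) * fkAux (k + 1) β

/-- `f'(β) = (1/2) ∑_{k≥1} (k^{k-2}/k!) β^{-1/2} ∫₀^β x^{k-3/2} e^{-kx} dx`. -/
noncomputable def fDerivAux (β : ℝ) : ℝ :=
  (1/2) * ∑' k : ℕ, ((k + 1 : ℝ) ^ ((k : ℝ) - 1) / (Nat.factorial (k + 1) : ℝ)) *
    (β ^ (-(1:ℝ)/2) *
      ∫ x in Set.Ioc (0:ℝ) β, x ^ ((k + 1 : ℝ) - 3/2) * Real.exp (-(k + 1 : ℝ) * x))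

/-- `g β = f β − β f'(β)`. -/
noncomputable def gAux (β : ℝ) : ℝ := fAux β - β * fDerivAux β

open Set

noncomputable def powExpKernel (c : ℝ) (k : ℕ) (x : ℝ) : ℝ :=
  x ^ ((k + 1 : ℝ) - c) * exp (-(k + 1 : ℝ) * x)

section Kernel

variable {c : ℝ} {k : ℕ} {x : ℝ}

lemma powExpKernel_nonneg (hx : 0 ≤ x) : 0 ≤ powExpKernel c k x := by
  unfold powExpKernel; positivity

lemma powExpKernel_eq (hx : 0 < x) :
    powExpKernel c k x = (x * exp (-x)) ^ k * (exp (-x) * x ^ ((2 - c) - 1)) := by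
  have hpow : x ^ ((k + 1 : ℝ) - c) = x ^ k * x ^ ((2 - c) - 1) := by
    rw [← rpow_natCast, ← rpow_add hx]; ring_nf
  have hexp : exp (-(k + 1 : ℝ) * x) = exp (-x) ^ k * exp (-x) := by
    rw [← exp_nat_mul, ← exp_add]; ring_nf
  rw [powExpKernel, hpow, hexp]; ring

lemma powExpKernel_le (hx : 0 < x) :
    powExpKernel c k x ≤ exp (-1) ^ k * (exp (-x) * x ^ ((2 - c) - 1)) := by
  rw [powExpKernel_eq hx]
  gcongr
  exact mul_exp_neg_le_exp_neg_one x

variable {s : Set ℝ}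

lemma integrableOn_powExpKernel (hc : c < 2) (hs : s ⊆ Ioi 0) (hsm : MeasurableSet s) :
    IntegrableOn (powExpKernel c k) s := by
  refine Integrable.mono' (((GammaIntegral_convergent (sub_pos.2 hc)).mono_set hs).const_mul
    (exp (-1) ^ k)) (by unfold powExpKernel; fun_prop) ?_
  filter_upwards [ae_restrict_mem hsm] with x hx
  have hx0 : 0 < x := hs hx
  rw [norm_of_nonneg (powExpKernel_nonneg hx0.le)]
  exact powExpKernel_le hx0

lemma setIntegral_powExpKernel_nonneg (hs : s ⊆ Ioi 0) (hsm : MeasurableSet s) :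
    0 ≤ ∫ x in s, powExpKernel c k x :=
  setIntegral_nonneg hsm fun _ hx => powExpKernel_nonneg (le_of_lt (hs hx))

lemma setIntegral_powExpKernel_le (hc : c < 2) (hs : s ⊆ Ioi 0) (hsm : MeasurableSet s) :
    ∫ x in s, powExpKernel c k x ≤ exp (-1) ^ k * Gamma (2 - c) := by
  have hΓ := GammaIntegral_convergent (sub_pos.2 hc)
  calc ∫ x in s, powExpKernel c k x
      ≤ ∫ x in s, exp (-1) ^ k * (exp (-x) * x ^ ((2 - c) - 1)) :=
        setIntegral_mono_on (integrableOn_powExpKernel hc hs hsm)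
          ((hΓ.mono_set hs).const_mul _) hsm fun x hx => powExpKernel_le (hs hx)
    _ = exp (-1) ^ k * ∫ x in s, exp (-x) * x ^ ((2 - c) - 1) := integral_const_mul _ _
    _ ≤ exp (-1) ^ k * ∫ x in Ioi 0, exp (-x) * x ^ ((2 - c) - 1) := by
        refine mul_le_mul_of_nonneg_left (setIntegral_mono_set hΓ ?_ hs.eventuallyLE)
          (by positivity)
        filter_upwards [ae_restrict_mem measurableSet_Ioi] with x (hx : 0 < x)
        positivity
    _ = exp (-1) ^ k * Gamma (2 - c) := by rw [Gamma_eq_integral (sub_pos.2 hc)]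

end Kernel

noncomputable def treeCoeff (k : ℕ) : ℝ :=
  (k + 1 : ℝ) ^ ((k : ℝ) - 1) / (Nat.factorial (k + 1) : ℝ)

lemma treeCoeff_nonneg (k : ℕ) : 0 ≤ treeCoeff k := by
  unfold treeCoeff; positivity

lemma treeCoeff_mul_exp_neg_one_pow_le (k : ℕ) :
    treeCoeff k * exp (-1) ^ k ≤ exp 1 / ((k : ℝ) + 1) ^ 2 := by
  have hk : (0 : ℝ) < k + 1 := by positivity
  have hcoeff :
      treeCoeff k = ((k : ℝ) + 1) ^ (k + 1) / (k + 1).factorial / ((k : ℝ) + 1) ^ 2 := by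
    rw [treeCoeff, show (k : ℝ) - 1 = ((k + 1 : ℕ) : ℝ) - (2 : ℕ) by push_cast; ring,
      rpow_sub hk, rpow_natCast, rpow_natCast]
    ring
  have hpow_div_factorial := pow_div_factorial_le_exp _ hk.le (k + 1)
  have hexp : exp ((k : ℝ) + 1) * exp (-1) ^ k = exp 1 := by
    rw [← exp_nat_mul, ← exp_add]; ring_nf
  rw [hcoeff, div_mul_eq_mul_div, ← hexp]
  gcongr

lemma summable_treeCoeff_mul {u : ℕ → ℝ} {C : ℝ} (hu0 : ∀ k, 0 ≤ u k)
    (hu : ∀ k, u k ≤ exp (-1) ^ k * C) : Summable fun k => treeCoeff k * u k := by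
  have hC : 0 ≤ C := by simpa using (hu0 0).trans (hu 0)
  refine Summable.of_nonneg_of_le (fun k => mul_nonneg (treeCoeff_nonneg k) (hu0 k))
    (fun k => ?_)
    ((summable_nat_add_iff 1).2 (summable_one_div_nat_pow.2 one_lt_two) |>.mul_left (exp 1 * C))
  calc treeCoeff k * u k ≤ treeCoeff k * (exp (-1) ^ k * C) :=
        mul_le_mul_of_nonneg_left (hu k) (treeCoeff_nonneg k)
    _ ≤ exp 1 / ((k : ℝ) + 1) ^ 2 * C := by
        rw [← mul_assoc]
        exact mul_le_mul_of_nonneg_right (treeCoeff_mul_exp_neg_one_pow_le k) hC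
    _ = exp 1 * C * (1 / ((k + 1 : ℕ) : ℝ) ^ 2) := by push_cast; ring

noncomputable def lowerIntegral (k : ℕ) (β : ℝ) : ℝ := ∫ x in Ioc 0 β, powExpKernel (3 / 2) k x

noncomputable def upperIntegral (k : ℕ) (β : ℝ) : ℝ := ∫ x in Ioi β, powExpKernel 1 k x

noncomputable def lowerSeries (β : ℝ) : ℝ := ∑' k, treeCoeff k * lowerIntegral k β

lemma lowerIntegral_nonneg (k : ℕ) (β : ℝ) : 0 ≤ lowerIntegral k β :=
  setIntegral_powExpKernel_nonneg Ioc_subset_Ioi_self measurableSet_Ioc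

lemma upperIntegral_nonneg (k : ℕ) {β : ℝ} (hβ : 0 ≤ β) : 0 ≤ upperIntegral k β :=
  setIntegral_powExpKernel_nonneg (Ioi_subset_Ioi hβ) measurableSet_Ioi

lemma summable_treeCoeff_mul_lowerIntegral (β : ℝ) :
    Summable fun k => treeCoeff k * lowerIntegral k β :=
  summable_treeCoeff_mul (fun k => lowerIntegral_nonneg k β)
    (fun _ => setIntegral_powExpKernel_le (by norm_num) Ioc_subset_Ioi_self measurableSet_Ioc)

lemma summable_treeCoeff_mul_upperIntegral {β : ℝ} (hβ : 0 ≤ β) :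
    Summable fun k => treeCoeff k * upperIntegral k β :=
  summable_treeCoeff_mul (fun k => upperIntegral_nonneg k hβ)
    (fun _ => setIntegral_powExpKernel_le (by norm_num) (Ioi_subset_Ioi hβ) measurableSet_Ioi)

lemma lowerIntegral_mono (k : ℕ) : Monotone (lowerIntegral k) := fun β β' hββ' =>
  setIntegral_mono_set (integrableOn_powExpKernel (by norm_num) Ioc_subset_Ioi_self
      measurableSet_Ioc)
    (by filter_upwards [ae_restrict_mem measurableSet_Ioc] with x hx
        exact powExpKernel_nonneg hx.1.le)
    (Ioc_subset_Ioc_right hββ').eventuallyLE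

lemma lowerIntegral_pos (k : ℕ) {β : ℝ} (hβ : 0 < β) : 0 < lowerIntegral k β := by
  rw [lowerIntegral, ← intervalIntegral.integral_of_le hβ.le]
  refine intervalIntegral.intervalIntegral_pos_of_pos_on ?_ (fun x hx => ?_) hβ
  · exact (intervalIntegrable_iff_integrableOn_Ioc_of_le hβ.le).2
      (integrableOn_powExpKernel (by norm_num) Ioc_subset_Ioi_self measurableSet_Ioc)
  · unfold powExpKernel; have := hx.1; positivity

lemma lowerSeries_mono : Monotone lowerSeries := fun _ _ hββ' =>
  (summable_treeCoeff_mul_lowerIntegral _).tsum_le_tsum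
    (fun k => mul_le_mul_of_nonneg_left (lowerIntegral_mono k hββ') (treeCoeff_nonneg k))
    (summable_treeCoeff_mul_lowerIntegral _)

lemma lowerSeries_pos {β : ℝ} (hβ : 0 < β) : 0 < lowerSeries β :=
  (summable_treeCoeff_mul_lowerIntegral β).tsum_pos
    (fun k => mul_nonneg (treeCoeff_nonneg k) (lowerIntegral_nonneg k β)) 0
    (mul_pos (by simp [treeCoeff]) (lowerIntegral_pos 0 hβ))

/-- The binder of `∫ x in Ioc 0 β` in `fkAux` extends over the `+`, so the tail integral enters
as a constant integrated over `(0, β]`. -/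
lemma fkAux_succ (k : ℕ) {β : ℝ} (hβ : 0 ≤ β) :
    fkAux (k + 1) β = β ^ ((1 : ℝ) / 2) * (lowerIntegral k β + β * upperIntegral k β) := by
  have hfk : fkAux (k + 1) β =
      β ^ ((1 : ℝ) / 2) * ∫ x in Ioc 0 β, (powExpKernel (3 / 2) k x + upperIntegral k β) := by
    simp only [fkAux, powExpKernel, upperIntegral, Nat.cast_add, Nat.cast_one]
  rw [hfk, integral_add (integrableOn_powExpKernel (by norm_num) Ioc_subset_Ioi_self
      measurableSet_Ioc) (integrableOn_const measure_Ioc_lt_top.ne), setIntegral_const,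
    volume_real_Ioc_of_le hβ, smul_eq_mul, sub_zero, lowerIntegral]

lemma lowerSeries_le_fAux {β : ℝ} (hβ : 0 ≤ β) :
    β ^ ((1 : ℝ) / 2) * lowerSeries β ≤ fAux β := by
  have hsum : Summable fun k => treeCoeff k * fkAux (k + 1) β := by
    refine (((summable_treeCoeff_mul_lowerIntegral β).mul_left (β ^ ((1 : ℝ) / 2))).add
      ((summable_treeCoeff_mul_upperIntegral hβ).mul_left (β ^ ((1 : ℝ) / 2) * β))).congr
      fun k => ?_
    rw [fkAux_succ k hβ]; ring
  rw [lowerSeries, ← tsum_mul_left]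
  refine ((summable_treeCoeff_mul_lowerIntegral β).mul_left _).tsum_le_tsum (fun k => ?_) hsum
  change _ ≤ treeCoeff k * _
  rw [fkAux_succ k hβ, mul_left_comm]
  refine mul_le_mul_of_nonneg_left (mul_le_mul_of_nonneg_left ?_ (by positivity))
    (treeCoeff_nonneg k)
  exact le_add_of_nonneg_right (mul_nonneg hβ (upperIntegral_nonneg k hβ))

lemma fDerivAux_eq (β : ℝ) : fDerivAux β = β ^ (-(1 : ℝ) / 2) / 2 * lowerSeries β := by
  rw [fDerivAux, lowerSeries, ← tsum_mul_left, ← tsum_mul_left]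
  congr 1 with k
  simp only [treeCoeff, lowerIntegral, powExpKernel]
  ring

lemma gAux_ge {β : ℝ} (hβ : 0 < β) : gAux β ≥ β ^ ((1 : ℝ) / 2) / 2 * lowerSeries β := by
  have hβhalf : β * β ^ (-(1 : ℝ) / 2) = β ^ ((1 : ℝ) / 2) := by
    rw [← rpow_one_add' hβ.le (by norm_num)]; norm_num
  have hf := lowerSeries_le_fAux hβ.le
  rw [gAux, fDerivAux_eq, ← mul_assoc, mul_div_assoc', hβhalf]
  linarith

theorem stmt_10 :
    (∀ β : ℝ, 0 < β →
      gAux β ≥ (β ^ ((1:ℝ)/2) / 2) *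
        ∑' k : ℕ, ((k + 1 : ℝ) ^ ((k : ℝ) - 1) / (Nat.factorial (k + 1) : ℝ)) *
          ∫ x in Set.Ioc (0:ℝ) β, x ^ ((k + 1 : ℝ) - 3/2) * Real.exp (-(k + 1 : ℝ) * x)) ∧
    Filter.Tendsto gAux Filter.atTop Filter.atTop := by
  refine ⟨fun β hβ => gAux_ge hβ, ?_⟩
  refine tendsto_atTop_mono' atTop ?_
    ((tendsto_rpow_atTop one_half_pos).atTop_mul_const (half_pos (lowerSeries_pos one_pos)))
  filter_upwards [eventually_ge_atTop 1] with β hβ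
  calc β ^ ((1 : ℝ) / 2) * (lowerSeries 1 / 2)
      ≤ β ^ ((1 : ℝ) / 2) / 2 * lowerSeries β := by
        rw [mul_div_assoc', div_mul_eq_mul_div]
        gcongr
        exact lowerSeries_mono hβ
    _ ≤ gAux β := gAux_ge (one_pos.trans_le hβ)
end

section
/- For n ≥ 2 and q ∈ [1000 log n / n, 1], the expected number of connected components of the Erdős–Rényi random graph G(n,q) satisfies 1 ≤ E[κ(G(n,q))] ≤ 1 + n ∑_{k=1}^{⌊n/2⌋} C(n,k) k^{k-2} q^{k-1} (1−q)^{k(n−k)}, and this upper bound is at most 1 + n³ e · n^{−499}/(1000 log n) for n sufficiently large. -/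
/-!
All but at most one component of a graph on `n` vertices have at most `n / 2` vertices. A set `S`
of `k` vertices is a component of `G(n,q)` only if the `k (n - k)` edges leaving it are absent and
`S` is connected: pointing every vertex of `S` other than a root `r` to a neighbour closer to `r`
gives `k - 1` distinct present edges inside `S`. There are at most `k ^ (k - 1) ≤ n k ^ (k - 2)`
such pointer maps, so a union bound over the sets `S` with `|S| ≤ n / 2` gives `compBound`. For
`q ≥ 1000 log n / n` the `k`-th summand is at most `n ^ (-498 k)` (by `1 - q ≤ exp (-q)` and
`k (n - k) ≥ k n / 2`), so the geometric series is at most `2 n ^ (-498)`; the remaining factor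
`log n` is absorbed because `log n = o(n)`.
-/

open MeasureTheory

/-- The set of potential edges of the complete graph on `Fin n`. -/
abbrev EdgeIdx (n : ℕ) := {e : Sym2 (Fin n) // ¬ e.IsDiag}

/-- The product Bernoulli(q) measure on edge indicator configurations:
the distribution of `G(n,q)`. -/
noncomputable def gnpMeasure (n : ℕ) (q : ℝ) : Measure (EdgeIdx n → Bool) :=
  Measure.pi fun _ =>
    (PMF.bernoulli (min (Real.toNNReal q) 1) (min_le_right _ _)).toMeasure

/-- The random graph associated with an edge configuration. -/
def gnpGraph {n : ℕ} (ω : EdgeIdx n → Bool) : SimpleGraph (Fin n) :=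
  SimpleGraph.fromEdgeSet {s : Sym2 (Fin n) | ∃ h : ¬ s.IsDiag, ω ⟨s, h⟩ = true}

/-- The number of connected components. -/
noncomputable def kappa {n : ℕ} (ω : EdgeIdx n → Bool) : ℕ :=
  Nat.card (gnpGraph ω).ConnectedComponent

/-- Expected number of connected components of `G(n,q)`. -/
noncomputable def expKappa (n : ℕ) (q : ℝ) : ℝ :=
  ∫ ω, (kappa ω : ℝ) ∂(gnpMeasure n q)

/-- The first-moment upper bound on the expected number of components. -/
noncomputable def compBound (n : ℕ) (q : ℝ) : ℝ :=
  1 + n * ∑ k ∈ Finset.Icc 1 (n / 2),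
    (n.choose k : ℝ) * (k : ℝ) ^ (k - 2) * q ^ (k - 1) * (1 - q) ^ (k * (n - k))

open Finset

def edgeEvent {ι : Type*} (A B : Finset ι) : Set (ι → Bool) :=
  {ω | (∀ i ∈ A, ω i = true) ∧ ∀ i ∈ B, ω i = false}

theorem measure_pi_edgeEvent {ι : Type*} [Fintype ι] (μ : Measure Bool) [IsProbabilityMeasure μ]
    {A B : Finset ι} (hAB : Disjoint A B) :
    Measure.pi (fun _ : ι => μ) (edgeEvent A B) = μ {true} ^ #A * μ {false} ^ #B := by
  classical
  have hpi : edgeEvent A B =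
      Set.univ.pi fun i => {b | (i ∈ A → b = true) ∧ (i ∈ B → b = false)} := by
    ext ω
    simp only [edgeEvent, Set.mem_ofPred_eq, Set.mem_univ_pi]
    grind
  rw [hpi, Measure.pi_pi]
  calc ∏ i, μ {b | (i ∈ A → b = true) ∧ (i ∈ B → b = false)}
      = ∏ i, (if i ∈ A then μ {true} else 1) * (if i ∈ B then μ {false} else 1) := by
        refine prod_congr rfl fun i _ => ?_
        by_cases hA : i ∈ A
        · simp [hA, disjoint_left.1 hAB hA, Set.ofPred_eq_eq_singleton]
        · by_cases hB : i ∈ B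
          · simp [hA, hB, Set.ofPred_eq_eq_singleton]
          · simp only [hA, hB, if_false, IsEmpty.forall_iff, and_true, Set.ofPred_true,
              measure_univ, mul_one]
    _ = μ {true} ^ #A * μ {false} ^ #B := by
        rw [prod_mul_distrib, Fintype.prod_ite_mem, Fintype.prod_ite_mem, prod_const, prod_const]

theorem Sym2.injective_mk_of_lt {ι α : Type*} {u w : ι → α} (hu : Function.Injective u)
    (d : α → ℕ) (hd : ∀ i, d (w i) < d (u i)) : Function.Injective fun i => s(u i, w i) := by
  intro i j hij
  rcases Sym2.eq_iff.1 hij with ⟨h, -⟩ | ⟨h₁, h₂⟩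
  · exact hu h
  · have hi := hd i
    rw [h₁, h₂] at hi
    exact absurd hi (hd j).asymm

namespace SimpleGraph

variable {V : Type*} {G : SimpleGraph V}

protected theorem Reachable.exists_adj_dist_lt {u v : V} (h : G.Reachable u v) (hne : u ≠ v) :
    ∃ w, G.Adj u w ∧ G.dist w v < G.dist u v := by
  obtain ⟨p, hp⟩ := h.exists_walk_length_eq_dist
  cases p with
  | nil => exact absurd rfl hne
  | @cons _ w _ ha q =>
    refine ⟨w, ha, ?_⟩
    have := dist_le q
    rw [Walk.length_cons] at hp
    omega

theorem ConnectedComponent.eq_of_half_lt_ncard [Finite V] {c c' : G.ConnectedComponent}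
    (hc : Nat.card V / 2 < c.supp.ncard) (hc' : Nat.card V / 2 < c'.supp.ncard) : c = c' := by
  by_contra hne
  have := Set.ncard_union_eq (pairwise_disjoint_supp_connectedComponent G hne)
  have := Set.ncard_le_card (c.supp ∪ c'.supp)
  omega

open Classical in
theorem card_connectedComponent_le_one_add [Fintype V] [Fintype G.ConnectedComponent] :
    Fintype.card G.ConnectedComponent ≤
      1 + #{c : G.ConnectedComponent | c.supp.ncard ≤ Fintype.card V / 2} := by
  have hlarge : #{c : G.ConnectedComponent | ¬ c.supp.ncard ≤ Fintype.card V / 2} ≤ 1 := by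
    refine card_le_one.2 fun c hc c' hc' => ?_
    simp only [mem_filter, mem_univ, true_and, not_le, ← Nat.card_eq_fintype_card] at hc hc'
    exact ConnectedComponent.eq_of_half_lt_ncard hc hc'
  have := card_filter_add_card_filter_not (s := univ) fun c : G.ConnectedComponent =>
    c.supp.ncard ≤ Fintype.card V / 2
  rw [card_univ] at this
  omega

end SimpleGraph

theorem Nat.pow_sub_one_le_mul_pow_sub_two {k n : ℕ} (hk : 1 ≤ k) (hkn : k ≤ n) :
    k ^ (k - 1) ≤ n * k ^ (k - 2) := by
  obtain rfl | hk₂ := hk.eq_or_lt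
  · simpa using hkn
  · rw [show k - 1 = k - 2 + 1 by omega, pow_succ, mul_comm]
    gcongr

section RandomGraph

variable {n : ℕ}

instance (q : ℝ) : IsProbabilityMeasure (gnpMeasure n q) := by
  unfold gnpMeasure; infer_instance

theorem gnpMeasure_real_edgeEvent {q : ℝ} (hq₀ : 0 ≤ q) (hq₁ : q ≤ 1)
    {A B : Finset (EdgeIdx n)} (hAB : Disjoint A B) :
    (gnpMeasure n q).real (edgeEvent A B) = q ^ #A * (1 - q) ^ #B := by
  rw [measureReal_def, gnpMeasure, measure_pi_edgeEvent _ hAB]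
  simp [PMF.bernoulli_apply, ENNReal.toReal_sub_of_le, hq₀, hq₁]

theorem gnpGraph_adj_iff {ω : EdgeIdx n → Bool} {e : EdgeIdx n} {a b : Fin n}
    (he : e.1 = s(a, b)) : (gnpGraph ω).Adj a b ↔ ω e = true := by
  obtain ⟨e, hdiag⟩ := e
  subst he
  have hab : a ≠ b := by simpa using hdiag
  simp [gnpGraph, hab]

def crossEdges (S : Finset (Fin n)) : Finset (EdgeIdx n) :=
  {e | ∃ a ∈ S, ∃ b ∉ S, e.1 = s(a, b)}

theorem card_crossEdges (S : Finset (Fin n)) : #(crossEdges S) = #S * (n - #S) := by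
  have hcompl : n - #S = #Sᶜ := by rw [card_compl, Fintype.card_fin]
  rw [hcompl, ← card_product, eq_comm]
  refine card_bij (fun p hp => ⟨s(p.1, p.2), ?_⟩) (fun p hp => ?_) (fun p hp p' hp' h => ?_) ?_
  · simp only [mem_product, mem_compl] at hp
    simpa using fun h : p.1 = p.2 => hp.2 (h ▸ hp.1)
  · simp only [mem_product, mem_compl] at hp
    simp only [crossEdges, mem_filter, mem_univ, true_and]
    exact ⟨p.1, hp.1, p.2, hp.2, rfl⟩
  · simp only [mem_product, mem_compl, Subtype.mk.injEq, Sym2.eq_iff] at hp hp' h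
    rcases h with ⟨h₁, h₂⟩ | ⟨h₁, -⟩
    · exact Prod.ext h₁ h₂
    · exact absurd (h₁ ▸ hp.1) hp'.2
  · intro e he
    obtain ⟨a, ha, b, hb, hab⟩ := by simpa [crossEdges] using he
    exact ⟨(a, b), by simpa using ⟨ha, hb⟩, Subtype.ext hab.symm⟩

def parentEdges {S : Finset (Fin n)} {r : Fin n} (f : S.erase r → S) : Finset (EdgeIdx n) :=
  {e | ∃ v : S.erase r, e.1 = s(↑v, ↑(f v))}

open Classical in
def parentMaps (S : Finset (Fin n)) (r : Fin n) : Finset (S.erase r → S) :=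
  {f | (∀ v : S.erase r, (v : Fin n) ≠ f v) ∧
    Function.Injective fun v : S.erase r => s((v : Fin n), (f v : Fin n))}

theorem card_parentMaps_le {S : Finset (Fin n)} {r : Fin n} (hr : r ∈ S) :
    #(parentMaps S r) ≤ #S ^ (#S - 1) := by
  refine (card_filter_le _ _).trans_eq ?_
  rw [card_univ, Fintype.card_fun, Fintype.card_coe, Fintype.card_coe, card_erase_of_mem hr]

theorem card_parentEdges {S : Finset (Fin n)} {r : Fin n} (hr : r ∈ S) {f : S.erase r → S}
    (hf : f ∈ parentMaps S r) : #(parentEdges f) = #S - 1 := by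
  simp only [parentMaps, mem_filter, mem_univ, true_and] at hf
  obtain ⟨hne, hinj⟩ := hf
  have hbij : #(univ : Finset (S.erase r)) = #(parentEdges f) := by
    refine card_bij (fun v _ => ⟨s(↑v, ↑(f v)), by simpa using hne v⟩)
      (fun v _ => by simp only [parentEdges, mem_filter, mem_univ, true_and]; exact ⟨v, rfl⟩)
      (fun v _ w _ h => hinj (congrArg Subtype.val h)) ?_
    intro e he
    simp only [parentEdges, mem_filter, mem_univ, true_and] at he
    obtain ⟨v, hv⟩ := he
    exact ⟨v, mem_univ v, Subtype.ext hv.symm⟩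
  rw [← hbij, card_univ, Fintype.card_coe, card_erase_of_mem hr]

theorem disjoint_parentEdges_crossEdges {S : Finset (Fin n)} {r : Fin n} (f : S.erase r → S) :
    Disjoint (parentEdges f) (crossEdges S) := by
  refine disjoint_left.2 fun e he he' => ?_
  simp only [parentEdges, crossEdges, mem_filter, mem_univ, true_and] at he he'
  obtain ⟨v, hv⟩ := he
  obtain ⟨a, ha, b, hb, hab⟩ := he'
  rcases Sym2.eq_iff.1 (hv.symm.trans hab) with ⟨-, h⟩ | ⟨h, -⟩
  · exact hb (h ▸ (f v).2)
  · exact hb (h ▸ mem_of_mem_erase v.2)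

def compEvent (n : ℕ) (S : Finset (Fin n)) : Set (EdgeIdx n → Bool) :=
  {ω | ∃ c : (gnpGraph ω).ConnectedComponent, c.supp = S}

theorem compEvent_subset {S : Finset (Fin n)} {r : Fin n} (hr : r ∈ S) :
    compEvent n S ⊆ ⋃ f ∈ parentMaps S r, edgeEvent (parentEdges f) (crossEdges S) := by
  rintro ω ⟨c, hc⟩
  have hmem : ∀ {a}, a ∈ S ↔ a ∈ c.supp := by simp [hc]
  have hparent : ∀ v : S.erase r, ∃ u, (gnpGraph ω).Adj v u ∧
      (gnpGraph ω).dist u r < (gnpGraph ω).dist v r := fun v =>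
    (c.reachable_of_mem_supp (hmem.1 (mem_of_mem_erase v.2)) (hmem.1 hr)).exists_adj_dist_lt
      (ne_of_mem_erase v.2)
  choose g hadj hlt using hparent
  let f : S.erase r → S := fun v =>
    ⟨g v, hmem.2 (c.mem_supp_of_adj_mem_supp (hmem.1 (mem_of_mem_erase v.2)) (hadj v))⟩
  have hf : f ∈ parentMaps S r := by
    simp only [parentMaps, mem_filter, mem_univ, true_and]
    exact ⟨fun v => (hadj v).ne,
      Sym2.injective_mk_of_lt Subtype.val_injective ((gnpGraph ω).dist · r) hlt⟩
  refine Set.mem_biUnion hf ⟨fun e he => ?_, fun e he => ?_⟩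
  · simp only [parentEdges, mem_filter, mem_univ, true_and] at he
    obtain ⟨v, hv⟩ := he
    exact (gnpGraph_adj_iff hv).1 (hadj v)
  · simp only [crossEdges, mem_filter, mem_univ, true_and] at he
    obtain ⟨a, ha, b, hb, hab⟩ := he
    rw [← Bool.not_eq_true, ← gnpGraph_adj_iff hab]
    exact fun hadj => hb (hmem.2 (c.mem_supp_of_adj_mem_supp (hmem.1 ha) hadj))

theorem gnpMeasure_real_compEvent_le {q : ℝ} (hq₀ : 0 ≤ q) (hq₁ : q ≤ 1) {S : Finset (Fin n)}
    (hS : S.Nonempty) :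
    (gnpMeasure n q).real (compEvent n S) ≤
      #S ^ (#S - 1) * (q ^ (#S - 1) * (1 - q) ^ (#S * (n - #S))) := by
  obtain ⟨r, hr⟩ := hS
  calc (gnpMeasure n q).real (compEvent n S)
      ≤ (gnpMeasure n q).real (⋃ f ∈ parentMaps S r, edgeEvent (parentEdges f) (crossEdges S)) :=
        measureReal_mono (compEvent_subset hr) (measure_ne_top _ _)
    _ ≤ ∑ f ∈ parentMaps S r, (gnpMeasure n q).real (edgeEvent (parentEdges f) (crossEdges S)) :=
        measureReal_biUnion_finset_le _ _
    _ = #(parentMaps S r) * (q ^ (#S - 1) * (1 - q) ^ (#S * (n - #S))) := by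
        rw [← nsmul_eq_mul, ← sum_const]
        refine sum_congr rfl fun f hf => ?_
        rw [gnpMeasure_real_edgeEvent hq₀ hq₁ (disjoint_parentEdges_crossEdges f),
          card_parentEdges hr hf, card_crossEdges]
    _ ≤ #S ^ (#S - 1) * (q ^ (#S - 1) * (1 - q) ^ (#S * (n - #S))) := by
        gcongr
        exact_mod_cast card_parentMaps_le hr

open Classical in
theorem kappa_le_one_add_sum (ω : EdgeIdx n → Bool) :
    kappa ω ≤ 1 + ∑ k ∈ Icc 1 (n / 2), #{S ∈ powersetCard k univ | ω ∈ compEvent n S} := by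
  calc kappa ω = Fintype.card (gnpGraph ω).ConnectedComponent := Nat.card_eq_fintype_card
    _ ≤ 1 + #{c : (gnpGraph ω).ConnectedComponent | c.supp.ncard ≤ Fintype.card (Fin n) / 2} :=
        SimpleGraph.card_connectedComponent_le_one_add
    _ ≤ 1 + #((Icc 1 (n / 2)).biUnion
          fun k => {S ∈ powersetCard k univ | ω ∈ compEvent n S}) := by
        gcongr
        refine card_le_card_of_injOn (fun c => c.supp.toFinset) (fun c hc => ?_)
          fun c _ c' _ h => SimpleGraph.ConnectedComponent.supp_injective (Set.toFinset_inj.1 h)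
        simp only [coe_filter, mem_univ, true_and, Set.mem_ofPred_eq, Fintype.card_fin,
          Set.ncard_eq_toFinset_card'] at hc
        simp only [coe_biUnion, coe_Icc, Set.mem_iUnion, coe_filter, mem_powersetCard_univ,
          Set.mem_ofPred_eq, Set.mem_Icc]
        exact ⟨_, ⟨card_pos.2 (Set.toFinset_nonempty.2 c.nonempty_supp), hc⟩, rfl,
          c, (Set.coe_toFinset _).symm⟩
    _ ≤ 1 + ∑ k ∈ Icc 1 (n / 2), #{S ∈ powersetCard k univ | ω ∈ compEvent n S} := by
        gcongr
        exact card_biUnion_le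

theorem one_le_expKappa (hn : n ≠ 0) (q : ℝ) : 1 ≤ expKappa n q := by
  have : NeZero n := ⟨hn⟩
  calc (1 : ℝ) = ∫ _, (1 : ℝ) ∂gnpMeasure n q := by simp
    _ ≤ expKappa n q := integral_mono (.of_finite) (.of_finite) fun ω => by
        have : Nonempty (gnpGraph ω).ConnectedComponent := ⟨(gnpGraph ω).connectedComponentMk 0⟩
        exact Nat.one_le_cast.2 Nat.card_pos

theorem expKappa_le_sum {q : ℝ} (hq₀ : 0 ≤ q) (hq₁ : q ≤ 1) :
    expKappa n q ≤ 1 + ∑ k ∈ Icc 1 (n / 2),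
      n.choose k * ((k : ℝ) ^ (k - 1) * (q ^ (k - 1) * (1 - q) ^ (k * (n - k)))) := by
  let μ := gnpMeasure n q
  calc expKappa n q
      ≤ ∫ ω, (1 + ∑ k ∈ Icc 1 (n / 2), ∑ S ∈ powersetCard k univ,
          (compEvent n S).indicator 1 ω) ∂μ := by
        refine integral_mono (.of_finite) (.of_finite) fun ω => ?_
        classical
        have h := (Nat.cast_le (α := ℝ)).2 (kappa_le_one_add_sum ω)
        push_cast [natCast_card_filter] at h
        simpa only [Set.indicator_apply, Pi.one_apply] using h
    _ = 1 + ∑ k ∈ Icc 1 (n / 2), ∑ S ∈ powersetCard k univ, μ.real (compEvent n S) := by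
        rw [integral_add (.of_finite) (.of_finite), integral_finsetSum _ fun _ _ => .of_finite]
        simp_rw [integral_finsetSum _ fun _ _ => Integrable.of_finite]
        simp [integral_indicator_one (DiscreteMeasurableSpace.forall_measurableSet _)]
    _ ≤ 1 + ∑ k ∈ Icc 1 (n / 2), ∑ S ∈ powersetCard k (univ : Finset (Fin n)),
          (k : ℝ) ^ (k - 1) * (q ^ (k - 1) * (1 - q) ^ (k * (n - k))) := by
        gcongr with k hk S hS
        rw [mem_Icc] at hk
        rw [mem_powersetCard_univ] at hS
        subst hS
        exact gnpMeasure_real_compEvent_le hq₀ hq₁ (card_pos.1 hk.1)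
    _ = _ := by simp

theorem expKappa_le_compBound {q : ℝ} (hq₀ : 0 ≤ q) (hq₁ : q ≤ 1) :
    expKappa n q ≤ compBound n q := by
  refine (expKappa_le_sum hq₀ hq₁).trans ?_
  rw [compBound, mul_sum]
  gcongr 1 + ∑ k ∈ _, ?_ with k hk
  rw [mem_Icc] at hk
  have hpow : ((k ^ (k - 1) : ℕ) : ℝ) ≤ ((n * k ^ (k - 2) : ℕ) : ℝ) :=
    Nat.cast_le.2 (Nat.pow_sub_one_le_mul_pow_sub_two hk.1 (hk.2.trans (Nat.div_le_self n 2)))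
  push_cast at hpow
  have : 0 ≤ 1 - q := by linarith
  calc (n.choose k : ℝ) * ((k : ℝ) ^ (k - 1) * (q ^ (k - 1) * (1 - q) ^ (k * (n - k))))
      ≤ n.choose k * ((n * (k : ℝ) ^ (k - 2)) * (q ^ (k - 1) * (1 - q) ^ (k * (n - k)))) := by
        gcongr
    _ = n * (n.choose k * (k : ℝ) ^ (k - 2) * q ^ (k - 1) * (1 - q) ^ (k * (n - k))) := by ring

end RandomGraph

section Asymptotics

open Real Filter

variable {n : ℕ} {q : ℝ}

theorem nonneg_of_mul_log_div_le {c : ℝ} (hc : 0 ≤ c) (hq : c * log n / n ≤ q) : 0 ≤ q :=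
  (div_nonneg (mul_nonneg hc (log_natCast_nonneg n)) n.cast_nonneg).trans hq

theorem one_sub_pow_le_inv_pow (hn : 0 < n) (hq : 1000 * log n / n ≤ q) (hq₁ : q ≤ 1) {k : ℕ}
    (hk : k ≤ n / 2) : (1 - q) ^ (k * (n - k)) ≤ ((n : ℝ) ^ (500 * k))⁻¹ := by
  have hn' : (0 : ℝ) < n := Nat.cast_pos.2 hn
  have hq₀ : 0 ≤ q := nonneg_of_mul_log_div_le (by norm_num) hq
  have hhalf : (k : ℝ) * (n / 2) ≤ (k * (n - k) : ℕ) := by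
    have : (k : ℝ) ≤ n / 2 := by
      rw [le_div_iff₀ two_pos]; exact_mod_cast (Nat.le_div_iff_mul_le two_pos).1 hk
    rw [Nat.cast_mul, Nat.cast_sub (by omega)]
    gcongr
    linarith
  have hexponent : 500 * k * log n ≤ q * (k * (n - k) : ℕ) :=
    calc 500 * k * log n = 1000 * log n / n * (k * (n / 2)) := by field_simp; ring
      _ ≤ q * (k * (n - k) : ℕ) := mul_le_mul hq hhalf (by positivity) hq₀
  calc (1 - q) ^ (k * (n - k)) ≤ exp (-q) ^ (k * (n - k)) :=
        pow_le_pow_left₀ (by linarith) (one_sub_le_exp_neg q) _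
    _ = exp (-(q * (k * (n - k) : ℕ))) := by rw [← exp_nat_mul]; ring_nf
    _ ≤ exp (-(500 * k * log n)) := by gcongr
    _ = ((n : ℝ) ^ (500 * k))⁻¹ := by
        rw [exp_neg, ← exp_log hn', ← exp_nat_mul, log_exp]; push_cast; ring_nf

theorem compBound_term_le (hn : 0 < n) (hq : 1000 * log n / n ≤ q) (hq₁ : q ≤ 1) {k : ℕ}
    (hk : k ≤ n / 2) :
    n.choose k * (k : ℝ) ^ (k - 2) * q ^ (k - 1) * (1 - q) ^ (k * (n - k)) ≤
      ((n : ℝ) ^ 498)⁻¹ ^ k := by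
  have hn' : (0 : ℝ) < n := Nat.cast_pos.2 hn
  have hq₀ : 0 ≤ q := nonneg_of_mul_log_div_le (by norm_num) hq
  have hkn : k ≤ n := hk.trans (Nat.div_le_self n 2)
  calc n.choose k * (k : ℝ) ^ (k - 2) * q ^ (k - 1) * (1 - q) ^ (k * (n - k))
      ≤ (n : ℝ) ^ k * (n : ℝ) ^ k * 1 * ((n : ℝ) ^ (500 * k))⁻¹ := by
        gcongr
        · exact_mod_cast Nat.choose_le_pow n k
        · exact (pow_le_pow_left₀ k.cast_nonneg (Nat.cast_le.2 hkn) _).trans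
            (pow_le_pow_right₀ (by exact_mod_cast hn) (Nat.sub_le k 2))
        · exact pow_le_one₀ hq₀ hq₁
        · exact one_sub_pow_le_inv_pow hn hq hq₁ hk
    _ = ((n : ℝ) ^ 498)⁻¹ ^ k := by
        rw [inv_pow, ← pow_mul, show 500 * k = k + k + 498 * k by ring, pow_add, pow_add,
          mul_comm 498 k]
        field_simp

theorem compBound_le (hn : 2 ≤ n) (hq : 1000 * log n / n ≤ q) (hq₁ : q ≤ 1) :
    compBound n q ≤ 1 + 2 / (n : ℝ) ^ 497 := by
  set r : ℝ := ((n : ℝ) ^ 498)⁻¹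
  have hn' : (2 : ℝ) ≤ n := by exact_mod_cast hn
  have hr : r ≤ 1 / 2 := by
    rw [inv_le_comm₀ (by positivity) (by norm_num)]
    calc (1 / 2 : ℝ)⁻¹ = 2 := by norm_num
      _ ≤ n := hn'
      _ ≤ (n : ℝ) ^ 498 := le_self_pow₀ (by linarith) (by norm_num)
  have hsum : ∑ k ∈ Icc 1 (n / 2), r ^ k ≤ 2 * r := by
    rw [← Ico_add_one_right_eq_Icc]
    refine (geom_sum_Ico_le_of_lt_one (by positivity) (by linarith)).trans ?_
    rw [pow_one, div_le_iff₀ (by linarith)]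
    nlinarith [show 0 < r by positivity]
  calc compBound n q ≤ 1 + n * ∑ k ∈ Icc 1 (n / 2), r ^ k := by
        rw [compBound]
        gcongr with k hk
        exact compBound_term_le (by omega) hq hq₁ (mem_Icc.1 hk).2
    _ ≤ 1 + n * (2 * r) := by gcongr
    _ = 1 + 2 / (n : ℝ) ^ 497 := by
        simp only [r]
        field_simp

theorem eventually_two_div_pow_le :
    ∀ᶠ n : ℕ in atTop, 2 / (n : ℝ) ^ 497 ≤
      (n : ℝ) ^ 3 * exp 1 * (n : ℝ) ^ (-(499 : ℝ)) / (1000 * log n) := by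
  have hlog : ∀ᶠ n : ℕ in atTop, log n ≤ (2000 : ℝ)⁻¹ * n := by
    filter_upwards [tendsto_natCast_atTop_atTop.eventually
      (isLittleO_log_id_atTop.bound (by norm_num : (0 : ℝ) < 2000⁻¹)),
      eventually_ge_atTop 1] with n hn hn₁
    have : (1 : ℝ) ≤ n := by exact_mod_cast hn₁
    simpa [abs_of_nonneg (log_natCast_nonneg n), abs_of_nonneg (by linarith : (0 : ℝ) ≤ n)]
      using hn
  filter_upwards [hlog, eventually_ge_atTop 2] with n hlog hn
  have hn' : (2 : ℝ) ≤ n := by exact_mod_cast hn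
  have hlogpos : 0 < log n := log_pos (by linarith)
  rw [rpow_neg (by linarith), rpow_ofNat,
    show (n : ℝ) ^ 3 * exp 1 * ((n : ℝ) ^ 499)⁻¹ = exp 1 / (n : ℝ) ^ 496 by field_simp,
    div_div, div_le_div_iff₀ (by positivity) (by positivity)]
  have hkey : 2000 * log n ≤ exp 1 * n := by nlinarith [add_one_le_exp 1]
  have := mul_le_mul_of_nonneg_left hkey (by positivity : (0 : ℝ) ≤ n ^ 496)
  linarith [show (n : ℝ) ^ 497 = n ^ 496 * n by ring]

end Asymptotics

theorem stmt_19 :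
    (∀ n : ℕ, 2 ≤ n → ∀ q : ℝ, q ∈ Set.Icc (1000 * Real.log n / n) 1 →
       1 ≤ expKappa n q ∧ expKappa n q ≤ compBound n q) ∧
    (∃ N : ℕ, ∀ n : ℕ, N ≤ n → ∀ q : ℝ, q ∈ Set.Icc (1000 * Real.log n / n) 1 →
       compBound n q ≤ 1 + (n : ℝ) ^ 3 * Real.exp 1 * (n : ℝ) ^ (-(499 : ℝ)) /
         (1000 * Real.log n)) := by
  refine ⟨fun n hn q ⟨hq, hq₁⟩ => ⟨one_le_expKappa (by omega) q, ?_⟩, ?_⟩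
  · exact expKappa_le_compBound (nonneg_of_mul_log_div_le (by norm_num) hq) hq₁
  · obtain ⟨N, hN⟩ :=
      (eventually_two_div_pow_le.and (Filter.eventually_ge_atTop 2)).exists_forall_of_atTop
    exact ⟨N, fun n hn q ⟨hq, hq₁⟩ =>
      (compBound_le (hN n hn).2 hq hq₁).trans (add_le_add_right (hN n hn).1 1)⟩
end
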